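/- Let T be a finite set of vectors in F_2^6 (the 6-dimensional vector space over the field with two elements) such that every subset of T consisting of exactly 4 vectors is linearly independent over F_2. Then the cardinality of T is at most 8. -/

import Mathlib

def wt (x : Fin 6 → ZMod 2) : ℕ := (Finset.univ.filter fun i => x i ≠ 0).card

theorem key_triple : ∀ u v w : Fin 6 → ZMod 2,
    4 ≤ wt u → 4 ≤ wt v → 4 ≤ wt w → 3 ≤ wt (u+v) → 3 ≤ wt (u+w) → 3 ≤ wt (v+w) →
    2 ≤ wt (u+v+w) → False := by
  intro u v w hu hv hw huv huw hvw huvw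
  classical
  have hcases : ∀ x : ZMod 2, x = 0 ∨ x = 1 := by decide
  set N : ZMod 2 → ZMod 2 → ZMod 2 → ℕ := fun p q r =>
    ∑ i : Fin 6, (if u i = p ∧ v i = q ∧ w i = r then 1 else 0) with hN
  have hwt : ∀ x : Fin 6 → ZMod 2, wt x = ∑ i : Fin 6, (if x i ≠ 0 then 1 else 0) :=
    fun x => Finset.card_filter _ _
  have key : ∀ (x : Fin 6 → ZMod 2) (p₁ q₁ r₁ p₂ q₂ r₂ p₃ q₃ r₃ p₄ q₄ r₄ : ZMod 2),
      (∀ i, (if x i ≠ 0 then (1:ℕ) else 0) =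
        (if u i = p₁ ∧ v i = q₁ ∧ w i = r₁ then 1 else 0) +
        (if u i = p₂ ∧ v i = q₂ ∧ w i = r₂ then 1 else 0) +
        (if u i = p₃ ∧ v i = q₃ ∧ w i = r₃ then 1 else 0) +
        (if u i = p₄ ∧ v i = q₄ ∧ w i = r₄ then 1 else 0)) →
      wt x = N p₁ q₁ r₁ + N p₂ q₂ r₂ + N p₃ q₃ r₃ + N p₄ q₄ r₄ := by
    intro x p₁ q₁ r₁ p₂ q₂ r₂ p₃ q₃ r₃ p₄ q₄ r₄ hpt
    rw [hwt, hN]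
    simp only [← Finset.sum_add_distrib]
    exact Finset.sum_congr rfl fun i _ => hpt i
  have hu' : wt u = N 1 0 0 + N 1 1 0 + N 1 0 1 + N 1 1 1 := by
    apply key; intro i
    rcases hcases (u i) with h1|h1 <;> rcases hcases (v i) with h2|h2 <;>
      rcases hcases (w i) with h3|h3 <;> simp [h1, h2, h3]
  have hv' : wt v = N 0 1 0 + N 1 1 0 + N 0 1 1 + N 1 1 1 := by
    apply key; intro i
    rcases hcases (u i) with h1|h1 <;> rcases hcases (v i) with h2|h2 <;>
      rcases hcases (w i) with h3|h3 <;> simp [h1, h2, h3]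
  have hw' : wt w = N 0 0 1 + N 1 0 1 + N 0 1 1 + N 1 1 1 := by
    apply key; intro i
    rcases hcases (u i) with h1|h1 <;> rcases hcases (v i) with h2|h2 <;>
      rcases hcases (w i) with h3|h3 <;> simp [h1, h2, h3]
  have h11 : (1 + 1 : ZMod 2) = 0 := by decide
  have huv' : wt (u+v) = N 1 0 0 + N 0 1 0 + N 1 0 1 + N 0 1 1 := by
    apply key; intro i
    rcases hcases (u i) with h1|h1 <;> rcases hcases (v i) with h2|h2 <;>
      rcases hcases (w i) with h3|h3 <;> simp [h1, h2, h3, h11]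
  have huw' : wt (u+w) = N 1 0 0 + N 0 0 1 + N 1 1 0 + N 0 1 1 := by
    apply key; intro i
    rcases hcases (u i) with h1|h1 <;> rcases hcases (v i) with h2|h2 <;>
      rcases hcases (w i) with h3|h3 <;> simp [h1, h2, h3, h11]
  have hvw' : wt (v+w) = N 0 1 0 + N 0 0 1 + N 1 1 0 + N 1 0 1 := by
    apply key; intro i
    rcases hcases (u i) with h1|h1 <;> rcases hcases (v i) with h2|h2 <;>
      rcases hcases (w i) with h3|h3 <;> simp [h1, h2, h3, h11]
  have huvw' : wt (u+v+w) = N 1 0 0 + N 0 1 0 + N 0 0 1 + N 1 1 1 := by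
    apply key; intro i
    rcases hcases (u i) with h1|h1 <;> rcases hcases (v i) with h2|h2 <;>
      rcases hcases (w i) with h3|h3 <;> simp [h1, h2, h3, h11]
  have htot : N 0 0 0 + N 1 0 0 + N 0 1 0 + N 0 0 1 + N 1 1 0 + N 1 0 1 + N 0 1 1 + N 1 1 1
      = 6 := by
    rw [hN]
    simp only [← Finset.sum_add_distrib]
    have : ∀ i : Fin 6,
        ((if u i = 0 ∧ v i = 0 ∧ w i = 0 then (1:ℕ) else 0) +
         (if u i = 1 ∧ v i = 0 ∧ w i = 0 then 1 else 0) +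
         (if u i = 0 ∧ v i = 1 ∧ w i = 0 then 1 else 0) +
         (if u i = 0 ∧ v i = 0 ∧ w i = 1 then 1 else 0) +
         (if u i = 1 ∧ v i = 1 ∧ w i = 0 then 1 else 0) +
         (if u i = 1 ∧ v i = 0 ∧ w i = 1 then 1 else 0) +
         (if u i = 0 ∧ v i = 1 ∧ w i = 1 then 1 else 0) +
         (if u i = 1 ∧ v i = 1 ∧ w i = 1 then 1 else 0)) = 1 := by
      intro i
      rcases hcases (u i) with h1|h1 <;> rcases hcases (v i) with h2|h2 <;>
        rcases hcases (w i) with h3|h3 <;> simp [h1, h2, h3]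
    rw [Finset.sum_congr rfl fun i _ => this i]
    simp
  rw [hu'] at hu; rw [hv'] at hv; rw [hw'] at hw
  rw [huv'] at huv; rw [huw'] at huw; rw [hvw'] at hvw; rw [huvw'] at huvw
  omega

theorem wt_coe (c : Fin 6 →₀ ZMod 2) : wt ⇑c = c.support.card := by
  unfold wt
  congr 1
  ext i
  simp [Finsupp.mem_support_iff]

/-- If every 4-element subset of a finite set `T` of vectors in `F₂^6` is linearly
independent over `F₂`, then `T` has at most 8 elements. -/
theorem card_le_eight_of_all_four_subsets_linearIndependent
    (T : Finset (Fin 6 → ZMod 2))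
    (h : ∀ S ⊆ T, S.card = 4 →
      LinearIndependent (ZMod 2) (fun v : S => (v : Fin 6 → ZMod 2))) :
    T.card ≤ 8 := by
  classical
  by_contra hT
  push_neg at hT
  -- Step 1: every nonempty subset of T with at most 4 elements has nonzero sum
  have sumA : ∀ S : Finset (Fin 6 → ZMod 2), S ⊆ T → S.Nonempty → S.card ≤ 4 →
      ∑ v ∈ S, v ≠ 0 := by
    intro S hST hSne hS4 hsum
    obtain ⟨S4, hSS4, hS4T, hcard⟩ :=
      Finset.exists_subsuperset_card_eq hST hS4 (by omega)
    have hli := h S4 hS4T hcard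
    rw [Fintype.linearIndependent_iff] at hli
    obtain ⟨s0, hs0⟩ := hSne
    have hz : ∑ v : {x // x ∈ S4}, (if (v : Fin 6 → ZMod 2) ∈ S then (1 : ZMod 2) else 0)
        • (v : Fin 6 → ZMod 2) = 0 := by
      rw [Finset.univ_eq_attach,
        Finset.sum_attach S4 (fun v => (if v ∈ S then (1 : ZMod 2) else 0) • v)]
      have : ∑ v ∈ S4, (if v ∈ S then (1 : ZMod 2) else 0) • v
          = ∑ v ∈ S4 ∩ S, v := by
        rw [← Finset.sum_ite_mem]
        refine Finset.sum_congr rfl fun v _ => ?_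
        split <;> simp
      rw [this, Finset.inter_eq_right.mpr hSS4, hsum]
    have := hli _ hz ⟨s0, hSS4 hs0⟩
    simp [hs0] at this
  -- Step 2: set up coordinates
  obtain ⟨B, hBT, hBspan, hBli⟩ :=
    exists_linearIndependent (ZMod 2) (↑T : Set (Fin 6 → ZMod 2))
  replace hBli : LinearIndepOn (ZMod 2) id B := hBli
  let b0 := Module.Basis.extend hBli
  haveI : Fintype ↥(hBli.extend (Set.subset_univ B)) :=
    IsNoetherian.fintypeBasisIndex b0
  have hcard6 : Fintype.card ↥(hBli.extend (Set.subset_univ B)) = 6 := by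
    rw [← Module.finrank_eq_card_basis b0]
    simp
  let e : Module.Basis (Fin 6) (ZMod 2) (Fin 6 → ZMod 2) :=
    b0.reindex (Fintype.equivFinOfCardEq hcard6)
  let Ifin : Finset (Fin 6) := Finset.univ.filter (fun i => e i ∈ B)
  have hBimg : B = e '' ↑Ifin := by
    apply Set.Subset.antisymm
    · intro x hx
      have hxe : x ∈ hBli.extend (Set.subset_univ B) := hBli.subset_extend _ hx
      refine ⟨(Fintype.equivFinOfCardEq hcard6) ⟨x, hxe⟩, ?_, ?_⟩
      · have : e ((Fintype.equivFinOfCardEq hcard6) ⟨x, hxe⟩) = x := by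
          simp only [e, Module.Basis.reindex_apply, Equiv.symm_apply_apply]
          exact Module.Basis.extend_apply_self hBli ⟨x, hxe⟩
        simp only [Ifin, Finset.coe_filter, Set.mem_setOf_eq, Finset.mem_univ, true_and]
        rw [this]; exact hx
      · simp only [e, Module.Basis.reindex_apply, Equiv.symm_apply_apply]
        exact Module.Basis.extend_apply_self hBli ⟨x, hxe⟩
    · rintro x ⟨i, hi, rfl⟩
      simp only [Ifin, Finset.coe_filter, Set.mem_setOf_eq] at hi
      exact hi.2
  -- support of coordinates of elements of span T is inside Ifin
  have hsupp : ∀ x : Fin 6 → ZMod 2, x ∈ Submodule.span (ZMod 2) (↑T : Set _) →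
      (e.repr x).support ⊆ Ifin := by
    intro x hx
    rw [← hBspan, hBimg, Module.Basis.mem_span_image] at hx
    intro i hi
    exact hx hi
  -- Step 3: the workhorse
  have lemC : ∀ s : Finset (Fin 6 → ZMod 2), s ⊆ T → s.Nonempty → s.card ≤ 3 →
      (∀ x ∈ s, x ∉ B) → 5 ≤ s.card + (e.repr (∑ v ∈ s, v)).support.card := by
    intro s hsT hsne hs3 hsB
    by_contra hlt
    push_neg at hlt
    set σ := ∑ v ∈ s, v with hσ
    have hσmem : σ ∈ Submodule.span (ZMod 2) (↑T : Set _) :=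
      Submodule.sum_mem _ fun v hv => Submodule.subset_span (hsT hv)
    set supp := (e.repr σ).support with hsuppdef
    have hsuppI : supp ⊆ Ifin := hsupp σ hσmem
    let D : Finset (Fin 6 → ZMod 2) := supp.image e
    have hDT : D ⊆ T := by
      intro x hx
      obtain ⟨i, hi, rfl⟩ := Finset.mem_image.mp hx
      have : e i ∈ B := (Finset.mem_filter.mp (hsuppI hi)).2
      exact hBT this
    have hDcard : D.card = supp.card := Finset.card_image_of_injective _ e.injective
    have hDs : Disjoint s D := by
      rw [Finset.disjoint_right]
      intro x hx
      obtain ⟨i, hi, rfl⟩ := Finset.mem_image.mp hx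
      intro hxs
      exact hsB _ hxs ((Finset.mem_filter.mp (hsuppI hi)).2)
    have hone : ∀ y : ZMod 2, y ≠ 0 → y = 1 := by decide
    have hDsum : ∑ v ∈ D, v = σ := by
      rw [Finset.sum_image (fun i _ j _ hij => e.injective hij)]
      have h1 : ∑ i ∈ supp, e i = ∑ i ∈ supp, (e.repr σ) i • e i := by
        refine Finset.sum_congr rfl fun i hi => ?_
        rw [hone _ (Finsupp.mem_support_iff.mp hi), one_smul]
      rw [h1]
      have h2 : ∑ i ∈ supp, (e.repr σ) i • e i = ∑ i : Fin 6, (e.repr σ) i • e i := by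
        refine Finset.sum_subset (Finset.subset_univ _) fun i _ hi => ?_
        rw [Finsupp.notMem_support_iff.mp hi, zero_smul]
      rw [h2, Module.Basis.sum_repr]
    have hsum0 : ∑ v ∈ s ∪ D, v = 0 := by
      rw [Finset.sum_union hDs, hDsum, ← hσ]
      have h2z : (2 : ZMod 2) = 0 := by decide
      rw [← two_smul (ZMod 2) σ, h2z, zero_smul]
    have hcardU : (s ∪ D).card ≤ 4 := by
      rw [Finset.card_union_of_disjoint hDs, hDcard]
      omega
    exact sumA (s ∪ D) (Finset.union_subset hsT hDT)
      (hsne.mono Finset.subset_union_left) hcardU hsum0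
  -- Step 4: find three elements of T outside B
  have hBfin : B.Finite := T.finite_toSet.subset hBT
  let Bf : Finset (Fin 6 → ZMod 2) := hBfin.toFinset
  have hBfT : Bf ⊆ T := by
    intro x hx
    exact hBT (hBfin.mem_toFinset.mp hx)
  have hBfcard : Bf.card ≤ 6 := by
    have : Bf = Ifin.image e := by
      apply Finset.ext
      intro x
      rw [Finset.mem_image, hBfin.mem_toFinset]
      constructor
      · intro hx
        rw [hBimg] at hx
        obtain ⟨i, hi, rfl⟩ := hx
        exact ⟨i, hi, rfl⟩
      · rintro ⟨i, hi, rfl⟩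
        rw [hBimg]
        exact ⟨i, hi, rfl⟩
    rw [this]
    calc (Ifin.image e).card ≤ Ifin.card := Finset.card_image_le
      _ ≤ (Finset.univ : Finset (Fin 6)).card := Finset.card_le_card (Finset.filter_subset _ _)
      _ = 6 := by simp
  have h3 : 3 ≤ (T \ Bf).card := by
    rw [Finset.card_sdiff_of_subset hBfT]
    omega
  obtain ⟨S3, hS3sub, hS3card⟩ := Finset.exists_subset_card_eq h3
  rw [Finset.card_eq_three] at hS3card
  obtain ⟨t1, t2, t3, h12, h13, h23, rfl⟩ := hS3card
  have hmem : ∀ x ∈ ({t1, t2, t3} : Finset (Fin 6 → ZMod 2)), x ∈ T ∧ x ∉ B := by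
    intro x hx
    have := hS3sub hx
    rw [Finset.mem_sdiff] at this
    exact ⟨this.1, fun hB => this.2 (hBfin.mem_toFinset.mpr hB)⟩
  have ht1 := hmem t1 (by simp)
  have ht2 := hmem t2 (by simp)
  have ht3 := hmem t3 (by simp)
  -- apply lemC to singletons, pairs, triple
  have happly : ∀ s : Finset (Fin 6 → ZMod 2), s ⊆ {t1, t2, t3} → s.Nonempty →
      5 ≤ s.card + (e.repr (∑ v ∈ s, v)).support.card := by
    intro s hs hsne
    refine lemC s (fun x hx => (hmem x (hs hx)).1) hsne ?_ (fun x hx => (hmem x (hs hx)).2)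
    calc s.card ≤ ({t1, t2, t3} : Finset _).card := Finset.card_le_card hs
      _ ≤ 3 := Finset.card_le_three ..
  set u := ⇑(e.repr t1) with hu
  set v := ⇑(e.repr t2) with hv
  set w := ⇑(e.repr t3) with hw
  have hsingle : ∀ t ∈ ({t1, t2, t3} : Finset (Fin 6 → ZMod 2)), 4 ≤ wt ⇑(e.repr t) := by
    intro t ht
    have := happly {t} (by intro x hx; simp at hx; subst hx; exact ht) ⟨t, by simp⟩
    rw [Finset.sum_singleton, Finset.card_singleton] at this
    rw [wt_coe]
    omega
  have hwu : 4 ≤ wt u := hsingle t1 (by simp)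
  have hwv : 4 ≤ wt v := hsingle t2 (by simp)
  have hww : 4 ≤ wt w := hsingle t3 (by simp)
  have hpair : ∀ a b : Fin 6 → ZMod 2, a ∈ ({t1,t2,t3} : Finset _) →
      b ∈ ({t1,t2,t3} : Finset _) → a ≠ b →
      3 ≤ wt (⇑(e.repr a) + ⇑(e.repr b)) := by
    intro a b ha hb hab
    have hsub : ({a, b} : Finset _) ⊆ {t1, t2, t3} := by
      intro x hx
      rcases Finset.mem_insert.mp hx with rfl | hx
      · exact ha
      · rw [Finset.mem_singleton] at hx; subst hx; exact hb
    have := happly {a, b} hsub ⟨a, by simp⟩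
    rw [Finset.sum_pair hab, Finset.card_pair hab] at this
    have hco : ⇑(e.repr a) + ⇑(e.repr b) = ⇑(e.repr (a + b)) := by
      rw [map_add]; rfl
    rw [hco, wt_coe]
    omega
  have huv : 3 ≤ wt (u + v) := hpair t1 t2 (by simp) (by simp) h12
  have huw : 3 ≤ wt (u + w) := hpair t1 t3 (by simp) (by simp) h13
  have hvw : 3 ≤ wt (v + w) := hpair t2 t3 (by simp) (by simp) h23
  have htrip : 2 ≤ wt (u + v + w) := by
    have hne : ({t1, t2, t3} : Finset _).Nonempty := ⟨t1, by simp⟩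
    have := happly {t1, t2, t3} (le_refl _) hne
    rw [Finset.card_eq_three.mpr ⟨t1, t2, t3, h12, h13, h23, rfl⟩] at this
    have hsum3 : ∑ x ∈ ({t1, t2, t3} : Finset _), x = t1 + t2 + t3 := by
      rw [Finset.sum_insert (by simp [h12, h13]), Finset.sum_pair h23, add_assoc]
    rw [hsum3] at this
    have hco : u + v + w = ⇑(e.repr (t1 + t2 + t3)) := by
      rw [map_add, map_add]; rfl
    rw [hco, wt_coe]
    omega
  exact key_triple u v w hwu hwv hww huv huw hvw htrip
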